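/- Wronskian representation of the first integrals: Let u, ψ, φ : ℝ → ℝ be twice differentiable functions of x and λ a real number such that ψ″ = −(u + λ)ψ and φ″ = −(u + λ)φ. Set Y := ψφ. Then 2Y Y″ − (Y′)² + 4(λ + u) Y² = −(ψφ′ − ψ′φ)². In particular, since the Wronskian ψφ′ − ψ′φ of two solutions of the same Schrödinger equation is constant, the left-hand side is a constant function of x. -/

import Mathlib

/-- The quadratic expression `2 Y Y'' - (Y')² + 4 (λ + u) Y²` built from a
function `Y` of one real variable. -/
noncomputable def quadExpr (lam : ℝ) (u Y : ℝ → ℝ) (x : ℝ) : ℝ :=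
  2 * Y x * deriv (deriv Y) x - (deriv Y x) ^ 2 + 4 * (lam + u x) * (Y x) ^ 2

/-!
Writing `Y = ψφ`, the Leibniz rule gives `Y'' = ψ''φ + 2ψ'φ' + ψφ''`, and substituting
`ψ'' = -(u + λ)ψ`, `φ'' = -(u + λ)φ` turns `2YY'' - (Y')² + 4(λ + u)Y²` into
`4ψψ'φφ' - (ψ'φ + ψφ')² = -(ψφ' - ψ'φ)²`: the potential cancels. The Wronskian of two
solutions of the same equation `y'' = q y` has derivative `ψ(qφ) - (qψ)φ = 0`, so it is constant.
-/

section Leibniz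

variable {𝕜 : Type*} [NontriviallyNormedField 𝕜] {f g : 𝕜 → 𝕜} {x : 𝕜}

theorem deriv_deriv_mul (hf : Differentiable 𝕜 f) (hg : Differentiable 𝕜 g)
    (hf' : DifferentiableAt 𝕜 (deriv f) x) (hg' : DifferentiableAt 𝕜 (deriv g) x) :
    deriv (deriv fun y => f y * g y) x
      = deriv (deriv f) x * g x + 2 * deriv f x * deriv g x + f x * deriv (deriv g) x := by
  have hfg : deriv (fun y => f y * g y) = fun y => deriv f y * g y + f y * deriv g y :=
    funext fun y => deriv_fun_mul (hf y) (hg y)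
  rw [hfg, deriv_fun_add (by fun_prop) (by fun_prop), deriv_fun_mul hf' (hg x),
    deriv_fun_mul (hf x) hg']
  ring

noncomputable def wronskian (f g : 𝕜 → 𝕜) (x : 𝕜) : 𝕜 :=
  f x * deriv g x - deriv f x * g x

theorem deriv_wronskian (hf : DifferentiableAt 𝕜 f x) (hg : DifferentiableAt 𝕜 g x)
    (hf' : DifferentiableAt 𝕜 (deriv f) x) (hg' : DifferentiableAt 𝕜 (deriv g) x) :
    deriv (wronskian f g) x = f x * deriv (deriv g) x - deriv (deriv f) x * g x := by
  unfold wronskian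
  rw [deriv_fun_sub (by fun_prop) (by fun_prop), deriv_fun_mul hf hg', deriv_fun_mul hf' hg]
  ring

end Leibniz

theorem wronskian_eq_of_deriv_deriv_eq {𝕜 : Type*} [RCLike 𝕜] {f g : 𝕜 → 𝕜} (q : 𝕜 → 𝕜)
    (hf : Differentiable 𝕜 f) (hg : Differentiable 𝕜 g)
    (hf' : Differentiable 𝕜 (deriv f)) (hg' : Differentiable 𝕜 (deriv g))
    (hfq : ∀ x, deriv (deriv f) x = q x * f x) (hgq : ∀ x, deriv (deriv g) x = q x * g x)
    (x y : 𝕜) : wronskian f g x = wronskian f g y := by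
  refine is_const_of_deriv_eq_zero (f := wronskian f g) (fun z => ((hf z).mul (hg' z)).sub ((hf' z).mul (hg z)))
    (fun z => ?_) x y
  rw [deriv_wronskian (hf z) (hg z) (hf' z) (hg' z), hfq, hgq]
  ring

theorem quadExpr_mul_eq_neg_wronskian_sq (lam : ℝ) {u ψ φ : ℝ → ℝ}
    (hψ : Differentiable ℝ ψ) (hφ : Differentiable ℝ φ) {x : ℝ}
    (hψ' : DifferentiableAt ℝ (deriv ψ) x) (hφ' : DifferentiableAt ℝ (deriv φ) x)
    (hψeq : deriv (deriv ψ) x = -(u x + lam) * ψ x)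
    (hφeq : deriv (deriv φ) x = -(u x + lam) * φ x) :
    quadExpr lam u (fun y => ψ y * φ y) x = -wronskian ψ φ x ^ 2 := by
  rw [quadExpr, deriv_deriv_mul hψ hφ hψ' hφ', hψeq, hφeq, deriv_fun_mul (hψ x) (hφ x),
    wronskian]
  ring

theorem wronskian_representation_general (u ψ φ : ℝ → ℝ) (lam : ℝ)
    (hψ : ∀ x, DifferentiableAt ℝ ψ x ∧ DifferentiableAt ℝ (deriv ψ) x)
    (hφ : ∀ x, DifferentiableAt ℝ φ x ∧ DifferentiableAt ℝ (deriv φ) x)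
    (hψeq : ∀ x, deriv (deriv ψ) x = -(u x + lam) * ψ x)
    (hφeq : ∀ x, deriv (deriv φ) x = -(u x + lam) * φ x) :
    (∀ x, quadExpr lam u (fun x => ψ x * φ x) x
        = -(ψ x * deriv φ x - deriv ψ x * φ x) ^ 2) ∧
    (∀ x₁ x₂, quadExpr lam u (fun x => ψ x * φ x) x₁
        = quadExpr lam u (fun x => ψ x * φ x) x₂) := by
  have key : ∀ x, quadExpr lam u (fun x => ψ x * φ x) x = -wronskian ψ φ x ^ 2 := fun x =>
    quadExpr_mul_eq_neg_wronskian_sq lam (fun y => (hψ y).1) (fun y => (hφ y).1)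
      (hψ x).2 (hφ x).2 (hψeq x) (hφeq x)
  refine ⟨key, fun x₁ x₂ => ?_⟩
  rw [key, key, wronskian_eq_of_deriv_deriv_eq (fun x => -(u x + lam))
    (fun y => (hψ y).1) (fun y => (hφ y).1) (fun y => (hψ y).2) (fun y => (hφ y).2)
    hψeq hφeq x₁ x₂]

/-- Wronskian representation of the first integrals: if `ψ'' = -(u + λ)ψ` and
`φ'' = -(u + λ)φ`, then for `Y = ψφ` one has
`2 Y Y'' - (Y')² + 4(λ + u)Y² = -(ψφ' - ψ'φ)²`; in particular the left-hand
side is a constant function of `x`. -/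
theorem wronskian_representation (u ψ φ : ℝ → ℝ) (lam : ℝ)
    (hu : ∀ x, DifferentiableAt ℝ u x ∧ DifferentiableAt ℝ (deriv u) x)
    (hψ : ∀ x, DifferentiableAt ℝ ψ x ∧ DifferentiableAt ℝ (deriv ψ) x)
    (hφ : ∀ x, DifferentiableAt ℝ φ x ∧ DifferentiableAt ℝ (deriv φ) x)
    (hψeq : ∀ x, deriv (deriv ψ) x = -(u x + lam) * ψ x)
    (hφeq : ∀ x, deriv (deriv φ) x = -(u x + lam) * φ x) :
    (∀ x, quadExpr lam u (fun x => ψ x * φ x) x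
        = -(ψ x * deriv φ x - deriv ψ x * φ x) ^ 2) ∧
    (∀ x₁ x₂, quadExpr lam u (fun x => ψ x * φ x) x₁
        = quadExpr lam u (fun x => ψ x * φ x) x₂) :=
  wronskian_representation_general u ψ φ lam hψ hφ hψeq hφeq
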